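/- Let F be ℝ or ℂ and let n, d ≥ 1. The power symmetric polynomial Pow_{n,d} = x_1^d + x_2^d + ⋯ + x_n^d can be written as Pow_{n,d} = Σ_{i=1}^{s} α_i f_i with s ≤ n(d+1), where each α_i ∈ F and each f_i ∈ VD_proj, i.e., each f_i = ∏_{1 ≤ a < b ≤ m_i}(ρ_a − ρ_b) for some m_i and ρ_1,…,ρ_{m_i} each equal to one of the variables x_1,…,x_n or a constant from F. -/

import Mathlib

/-! Lagrange interpolation at `d + 1` distinct nodes `c₀, …, c_d` writes `X ^ d` as a linear
combination of the `d + 1` products `∏_{i ≠ k} (X - cᵢ)`. Up to the nonzero constant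
`∏_{a < b, a,b ≠ k} (c_a - c_b)`, such a product evaluated at `x_j` is the Vandermonde product of
`(x_j, cᵢ : i ≠ k)`, so each `x_j ^ d` costs `d + 1` projections and `Pow_{n,d}` costs `n(d + 1)`. -/

open MvPolynomial

/-- Either a variable or a constant: the allowed entries in simple projections. -/
def IsVarOrConst {F : Type*} [Field F] {n : ℕ} (ρ : MvPolynomial (Fin n) F) : Prop :=
  (∃ j, ρ = X j) ∨ (∃ c : F, ρ = C c)

/-- The sign convention of the paper, opposite to that of `Matrix.det_vandermonde`. -/
def vandermondeProd {R : Type*} [CommRing R] {m : ℕ} (ρ : Fin m → R) : R :=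
  ∏ a : Fin m, ∏ b ∈ Finset.Ioi a, (ρ a - ρ b)

section Vandermonde

variable {R : Type*} [CommRing R] {d : ℕ}

theorem vandermondeProd_cons (x : R) (c : Fin d → R) :
    vandermondeProd (Fin.cons x c : Fin (d + 1) → R) = (∏ i, (x - c i)) * vandermondeProd c := by
  simp only [vandermondeProd, Fin.prod_univ_succ, Fin.prod_Ioi_zero, Fin.prod_Ioi_succ,
    Fin.cons_zero, Fin.cons_succ]

theorem map_vandermondeProd {S : Type*} [CommRing S] (φ : R →+* S) (c : Fin d → R) :
    vandermondeProd (φ ∘ c) = φ (vandermondeProd c) := by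
  simp only [vandermondeProd, map_prod, map_sub, Function.comp_apply]

theorem vandermondeProd_ne_zero [IsDomain R] {c : Fin d → R} (hc : Function.Injective c) :
    vandermondeProd c ≠ 0 :=
  Finset.prod_ne_zero_iff.2 fun _ _ => Finset.prod_ne_zero_iff.2 fun _ hb =>
    sub_ne_zero.2 (hc.ne (Finset.mem_Ioi.1 hb).ne)

end Vandermonde

open Polynomial in
theorem Polynomial.exists_eq_sum_C_mul_prod_X_sub_C {F : Type*} [Field F] {d : ℕ}
    {v : Fin (d + 1) → F} (hv : Function.Injective v) {p : F[X]} (hp : p.degree ≤ d) :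
    ∃ β : Fin (d + 1) → F, p = ∑ k, C (β k) * ∏ i : Fin d, (X - C (v (k.succAbove i))) := by
  have hdeg : p.degree < (Finset.univ : Finset (Fin (d + 1))).card := by
    rw [Finset.card_univ, Fintype.card_fin]
    exact hp.trans_lt (by exact_mod_cast d.lt_succ_self)
  refine ⟨fun k => p.eval (v k) * ∏ i : Fin d, (v k - v (k.succAbove i))⁻¹,
    (Lagrange.eq_interpolate hv.injOn hdeg).trans ?_⟩
  rw [Lagrange.interpolate_apply]
  refine Finset.sum_congr rfl fun k _ => ?_
  have hbasis : Lagrange.basis Finset.univ v k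
      = C (∏ i : Fin d, (v k - v (k.succAbove i))⁻¹)
        * ∏ i : Fin d, (X - C (v (k.succAbove i))) := by
    rw [Lagrange.basis, ← Finset.compl_singleton, ← Fin.image_succAbove_univ,
      Finset.prod_image fun _ _ _ _ h => Fin.succAbove_right_injective h]
    simp only [Lagrange.basisDivisor, Finset.prod_mul_distrib, map_prod]
  rw [hbasis, map_mul, mul_assoc]

theorem exists_pow_eq_sum_algebraMap_mul_vandermondeProd {F A : Type*} [Field F] [CommRing A]
    [Algebra F A] {d : ℕ} {v : Fin (d + 1) → F} (hv : Function.Injective v) :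
    ∃ γ : Fin (d + 1) → F, ∀ x : A, x ^ d =
      ∑ k, algebraMap F A (γ k) *
        vandermondeProd (Fin.cons x (algebraMap F A ∘ v ∘ k.succAbove) : Fin (d + 1) → A) := by
  obtain ⟨β, hβ⟩ := Polynomial.exists_eq_sum_C_mul_prod_X_sub_C hv
    (Polynomial.degree_X_pow_le (R := F) d)
  refine ⟨fun k => β k * (vandermondeProd (v ∘ k.succAbove))⁻¹, fun x => ?_⟩
  have hx := congrArg (Polynomial.aeval x) hβ
  simp only [map_pow, map_sum, map_mul, map_prod, map_sub, Polynomial.aeval_X,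
    Polynomial.aeval_C] at hx
  rw [hx]
  refine Finset.sum_congr rfl fun k _ => ?_
  have hW := vandermondeProd_ne_zero (hv.comp (Fin.succAbove_right_injective (p := k)))
  rw [vandermondeProd_cons, map_vandermondeProd, map_mul, mul_assoc, mul_left_comm _ (∏ i, _),
    ← map_mul, inv_mul_cancel₀ hW, map_one, mul_one]
  rfl

theorem power_symmetric_sum_of_VD_proj_general (F : Type*) [RCLike F] (n d : ℕ) :
    ∃ (s : ℕ) (_ : s ≤ n * (d + 1)) (α : Fin s → F)
      (f : Fin s → MvPolynomial (Fin n) F),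
      (∀ i, ∃ (m : ℕ) (_ : 1 ≤ m) (ρ : Fin m → MvPolynomial (Fin n) F),
        (∀ a, IsVarOrConst (ρ a)) ∧
        f i = ∏ a : Fin m, ∏ b ∈ Finset.Ioi a, (ρ a - ρ b)) ∧
      (∑ j : Fin n, X j ^ d) = ∑ i, C (α i) * f i := by
  set v : Fin (d + 1) → F := fun a => (a : ℕ)
  have hv : Function.Injective v := Nat.cast_injective.comp Fin.val_injective
  obtain ⟨γ, hγ⟩ :=
    exists_pow_eq_sum_algebraMap_mul_vandermondeProd (A := MvPolynomial (Fin n) F) hv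
  let ρ (p : Fin n × Fin (d + 1)) : Fin (d + 1) → MvPolynomial (Fin n) F :=
    Fin.cons (X p.1) (algebraMap F _ ∘ v ∘ p.2.succAbove)
  let e : Fin (n * (d + 1)) ≃ Fin n × Fin (d + 1) := finProdFinEquiv.symm
  refine ⟨n * (d + 1), le_rfl, fun i => γ (e i).2, fun i => vandermondeProd (ρ (e i)),
    fun i => ⟨d + 1, d.succ_pos, ρ (e i), fun a => ?_, rfl⟩, ?_⟩
  · exact Fin.cases (Or.inl ⟨_, rfl⟩) (fun _ => Or.inr ⟨_, rfl⟩) a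
  · rw [Fintype.sum_equiv e _ (fun p => C (γ p.2) * vandermondeProd (ρ p)) fun _ => rfl,
      Fintype.sum_prod_type]
    exact Finset.sum_congr rfl fun j _ => hγ (X j)

/-- The power symmetric polynomial `Pow_{n,d} = x₁^d + ⋯ + xₙ^d` is an `F`-linear
combination of at most `n(d+1)` simple projections of Vandermonde polynomials. -/
theorem power_symmetric_sum_of_VD_proj (F : Type*) [RCLike F] (n d : ℕ)
    (hn : 1 ≤ n) (hd : 1 ≤ d) :
    ∃ (s : ℕ) (_ : s ≤ n * (d + 1)) (α : Fin s → F)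
      (f : Fin s → MvPolynomial (Fin n) F),
      (∀ i, ∃ (m : ℕ) (_ : 1 ≤ m) (ρ : Fin m → MvPolynomial (Fin n) F),
        (∀ a, IsVarOrConst (ρ a)) ∧
        f i = ∏ a : Fin m, ∏ b ∈ Finset.Ioi a, (ρ a - ρ b)) ∧
      (∑ j : Fin n, X j ^ d) = ∑ i, C (α i) * f i :=
  power_symmetric_sum_of_VD_proj_general F n d
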